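/- Let M3 be a matching of maximum weight among all matchings of size n/3 in G. Then w(M3) ≥ Σ_{xyz ∈ P*} max{w(xy), w(yz)} ≥ (1/2)·OPT. Moreover, if n is even and M2 is a matching of maximum weight among all matchings of size n/2 in G, then w(M2) ≥ w(M3). -/

import Mathlib

open Finset
open scoped Classical

namespace MW3PP

/-- A 3-path `xyz`: a path on three distinct vertices with middle vertex `y`. -/
structure P3 (V : Type*) where
  x : V
  y : V
  z : V
  hxy : x ≠ y
  hyz : y ≠ z
  hxz : x ≠ z

variable {V : Type*} [Fintype V] [DecidableEq V]

/-- The vertex set of a 3-path. -/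
def P3.verts (p : P3 V) : Finset V := {p.x, p.y, p.z}

/-- The two edges of a 3-path. -/
def P3.edges (p : P3 V) : Finset (Sym2 V) := {s(p.x, p.y), s(p.y, p.z)}

/-- The weight of a 3-path. -/
def P3.wt (w : Sym2 V → ℝ) (p : P3 V) : ℝ := w s(p.x, p.y) + w s(p.y, p.z)

/-- The total weight of a set of edges. -/
def ew (w : Sym2 V → ℝ) (F : Finset (Sym2 V)) : ℝ := ∑ e ∈ F, w e

/-- The total weight of a set of 3-paths. -/
def pw (w : Sym2 V → ℝ) (P : Finset (P3 V)) : ℝ := ∑ p ∈ P, p.wt w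

/-- `∑_{xyz ∈ S} max (w (xy)) (w (yz))`. -/
def maxSum (w : Sym2 V → ℝ) (S : Finset (P3 V)) : ℝ :=
  ∑ p ∈ S, max (w s(p.x, p.y)) (w s(p.y, p.z))

/-- A perfect 3-path packing: `n/3` pairwise vertex-disjoint 3-paths covering all vertices. -/
def IsPacking (P : Finset (P3 V)) : Prop :=
  P.card = Fintype.card V / 3 ∧
  (∀ p ∈ P, ∀ q ∈ P, p ≠ q → Disjoint p.verts q.verts) ∧
  (∀ v : V, ∃ p ∈ P, v ∈ p.verts)

/-- A maximum-weight perfect 3-path packing. -/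
def IsMaxPacking (w : Sym2 V → ℝ) (P : Finset (P3 V)) : Prop :=
  IsPacking P ∧ ∀ Q : Finset (P3 V), IsPacking Q → pw w Q ≤ pw w P

/-- A matching: a set of pairwise vertex-disjoint (non-loop) edges. -/
def IsMatching (M : Finset (Sym2 V)) : Prop :=
  (∀ e ∈ M, ¬ e.IsDiag) ∧
  ∀ e ∈ M, ∀ f ∈ M, e ≠ f → ∀ v : V, v ∈ e → v ∉ f

/-- A maximum-weight matching among all matchings of size `k`. -/
def IsMaxMatchingOfSize (w : Sym2 V → ℝ) (k : ℕ) (M : Finset (Sym2 V)) : Prop :=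
  IsMatching M ∧ M.card = k ∧
  ∀ M' : Finset (Sym2 V), IsMatching M' → M'.card = k → ew w M' ≤ ew w M

/-- `v ∈ V(M)` : vertex `v` is covered by the matching `M`. -/
def covered (M : Finset (Sym2 V)) (v : V) : Prop := ∃ e ∈ M, v ∈ e

/-- `e_u` : the edge of `M` containing `u` (junk value if there is none). -/
noncomputable def eMatch (M : Finset (Sym2 V)) (u : V) : Sym2 V :=
  if h : ∃ e ∈ M, u ∈ e then h.choose else s(u, u)

/-- The cost `c` of an edge with respect to a matching `M`:
`c(uv) = w(uv) - min (w (e_u)) (w (e_v))` if both endpoints are covered by `M`,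
and `c(uv) = w(uv)` otherwise. -/
noncomputable def cost (w : Sym2 V → ℝ) (M : Finset (Sym2 V)) : Sym2 V → ℝ :=
  Sym2.lift ⟨fun u v =>
    if covered M u ∧ covered M v then
      w s(u, v) - min (w (eMatch M u)) (w (eMatch M v))
    else w s(u, v), by
      intro u v
      dsimp only
      by_cases h : covered M u ∧ covered M v
      · rw [if_pos h, if_pos (show covered M v ∧ covered M u from ⟨h.2, h.1⟩),
          Sym2.eq_swap, min_comm]
      · rw [if_neg h, if_neg (show ¬(covered M v ∧ covered M u) from fun h' => h ⟨h'.2, h'.1⟩),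
          Sym2.eq_swap]⟩

/-- The total cost of a set of edges. -/
noncomputable def cw (w : Sym2 V → ℝ) (M F : Finset (Sym2 V)) : ℝ := ∑ e ∈ F, cost w M e

/-- The number of vertices of the 3-path `p` covered by `M`. -/
noncomputable def kcnt (M : Finset (Sym2 V)) (p : P3 V) : ℕ :=
  (p.verts.filter fun v => covered M v).card

/-- Exactly one of the two edges of `p` lies in `M`. -/
def exOne (M : Finset (Sym2 V)) (p : P3 V) : Prop :=
  (s(p.x, p.y) ∈ M ∧ s(p.y, p.z) ∉ M) ∨ (s(p.x, p.y) ∉ M ∧ s(p.y, p.z) ∈ M)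

def cls1 (M : Finset (Sym2 V)) (p : P3 V) : Prop := kcnt M p = 0
def cls2 (M : Finset (Sym2 V)) (p : P3 V) : Prop := kcnt M p = 1 ∧ ¬ covered M p.y
def cls3 (M : Finset (Sym2 V)) (p : P3 V) : Prop := kcnt M p = 1 ∧ covered M p.y
def cls4 (M : Finset (Sym2 V)) (p : P3 V) : Prop := kcnt M p = 2 ∧ ¬ covered M p.y
def cls5 (M : Finset (Sym2 V)) (p : P3 V) : Prop := kcnt M p = 2 ∧ covered M p.y ∧ exOne M p
def cls6 (M : Finset (Sym2 V)) (p : P3 V) : Prop :=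
  kcnt M p = 2 ∧ covered M p.y ∧ s(p.x, p.y) ∉ M ∧ s(p.y, p.z) ∉ M
def cls7 (M : Finset (Sym2 V)) (p : P3 V) : Prop := kcnt M p = 3 ∧ exOne M p
def cls8 (M : Finset (Sym2 V)) (p : P3 V) : Prop :=
  kcnt M p = 3 ∧ s(p.x, p.y) ∉ M ∧ s(p.y, p.z) ∉ M

/-- The subset of a set of 3-paths satisfying a predicate. -/
noncomputable def psel (P : Finset (P3 V)) (c : P3 V → Prop) : Finset (P3 V) := P.filter c

/-- The set of all edges of the 3-paths in `S`. -/
def Esub (S : Finset (P3 V)) : Finset (Sym2 V) := S.biUnion P3.edges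

/-- The heaviest edge of a 3-path (the edge `xy` in case of a tie). -/
noncomputable def heavy (w : Sym2 V → ℝ) (p : P3 V) : Sym2 V :=
  if w s(p.y, p.z) ≤ w s(p.x, p.y) then s(p.x, p.y) else s(p.y, p.z)

noncomputable def X1 (w : Sym2 V → ℝ) (P : Finset (P3 V)) (M : Finset (Sym2 V)) :
    Finset (Sym2 V) := (psel P (cls1 M)).image (heavy w)
noncomputable def X2 (P : Finset (P3 V)) (M : Finset (Sym2 V)) : Finset (Sym2 V) :=
  (psel P (cls2 M)).image fun p => if covered M p.x then s(p.x, p.y) else s(p.y, p.z)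
noncomputable def X3 (w : Sym2 V → ℝ) (P : Finset (P3 V)) (M : Finset (Sym2 V)) :
    Finset (Sym2 V) := (psel P (cls3 M)).image (heavy w)
noncomputable def X4 (w : Sym2 V → ℝ) (P : Finset (P3 V)) (M : Finset (Sym2 V)) :
    Finset (Sym2 V) := (psel P (cls4 M)).image (heavy w)
noncomputable def X5 (P : Finset (P3 V)) (M : Finset (Sym2 V)) : Finset (Sym2 V) :=
  (psel P (cls5 M)).image fun p => if s(p.x, p.y) ∈ M then s(p.y, p.z) else s(p.x, p.y)
noncomputable def X6 (P : Finset (P3 V)) (M : Finset (Sym2 V)) : Finset (Sym2 V) :=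
  (psel P (cls6 M)).image fun p => if covered M p.x then s(p.y, p.z) else s(p.x, p.y)
noncomputable def X7 (P : Finset (P3 V)) (M : Finset (Sym2 V)) : Finset (Sym2 V) :=
  (psel P (cls7 M)).image fun p => if s(p.x, p.y) ∈ M then s(p.y, p.z) else s(p.x, p.y)
noncomputable def X8 (w : Sym2 V → ℝ) (P : Finset (P3 V)) (M : Finset (Sym2 V)) :
    Finset (Sym2 V) := (psel P (cls8 M)).image (heavy w)

noncomputable def Y1 (w : Sym2 V → ℝ) (P : Finset (P3 V)) (M : Finset (Sym2 V)) :
    Finset (Sym2 V) := Esub (psel P (cls1 M)) \ X1 w P M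
noncomputable def Y2 (P : Finset (P3 V)) (M : Finset (Sym2 V)) : Finset (Sym2 V) :=
  Esub (psel P (cls2 M)) \ X2 P M
noncomputable def Y3 (w : Sym2 V → ℝ) (P : Finset (P3 V)) (M : Finset (Sym2 V)) :
    Finset (Sym2 V) := Esub (psel P (cls3 M)) \ X3 w P M
noncomputable def Y4 (w : Sym2 V → ℝ) (P : Finset (P3 V)) (M : Finset (Sym2 V)) :
    Finset (Sym2 V) := Esub (psel P (cls4 M)) \ X4 w P M
noncomputable def Y5 (P : Finset (P3 V)) (M : Finset (Sym2 V)) : Finset (Sym2 V) :=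
  Esub (psel P (cls5 M)) \ X5 P M
noncomputable def Y6 (P : Finset (P3 V)) (M : Finset (Sym2 V)) : Finset (Sym2 V) :=
  Esub (psel P (cls6 M)) \ X6 P M
noncomputable def Y7 (P : Finset (P3 V)) (M : Finset (Sym2 V)) : Finset (Sym2 V) :=
  Esub (psel P (cls7 M)) \ X7 P M
noncomputable def Y8 (w : Sym2 V → ℝ) (P : Finset (P3 V)) (M : Finset (Sym2 V)) :
    Finset (Sym2 V) := Esub (psel P (cls8 M)) \ X8 w P M

/-- An edge is a middle edge (w.r.t. `M`) if exactly one of its endpoints lies in `V(M)`. -/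
def isMiddle (M : Finset (Sym2 V)) (e : Sym2 V) : Prop :=
  ∃ u v : V, e = s(u, v) ∧ covered M u ∧ ¬ covered M v

/-- Two edges share a vertex. -/
def shares (e f : Sym2 V) : Prop := ∃ v, v ∈ e ∧ v ∈ f

/-- `g` is a middle edge of some 3-path in `S`. -/
def middleIn (M : Finset (Sym2 V)) (S : Finset (P3 V)) (g : Sym2 V) : Prop :=
  (∃ p ∈ S, g ∈ p.edges) ∧ isMiddle M g

/-- The 3-paths of `P` lying in classes 2, 3 or 4. -/
noncomputable def P234 (P : Finset (P3 V)) (M : Finset (Sym2 V)) : Finset (P3 V) :=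
  psel P fun p => cls2 M p ∨ cls3 M p ∨ cls4 M p

/-- `M_1`: edges of `M` sharing a vertex with at least one middle edge of a 3-path of `P*_6`. -/
noncomputable def Mset1 (P : Finset (P3 V)) (M : Finset (Sym2 V)) : Finset (Sym2 V) :=
  M.filter fun f => ∃ g, middleIn M (psel P (cls6 M)) g ∧ shares f g

/-- `M_2`: edges of `M` sharing a vertex with at least one middle edge, all middle edges met
belonging to 3-paths of `P*_2 ∪ P*_3 ∪ P*_4`. -/
noncomputable def Mset2 (P : Finset (P3 V)) (M : Finset (Sym2 V)) : Finset (Sym2 V) :=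
  M.filter fun f =>
    (∃ g, middleIn M P g ∧ shares f g) ∧
    ∀ g, middleIn M P g → shares f g → middleIn M (P234 P M) g

/-- `M_3 = M ∩ E(P*_7)`. -/
noncomputable def Mset3 (P : Finset (P3 V)) (M : Finset (Sym2 V)) : Finset (Sym2 V) :=
  M ∩ Esub (psel P (cls7 M))

/-- `M_4 = M ∩ E(P*_5)`. -/
noncomputable def Mset4 (P : Finset (P3 V)) (M : Finset (Sym2 V)) : Finset (Sym2 V) :=
  M ∩ Esub (psel P (cls5 M))

/-- The middle edges of 3-paths of `P*_6`. -/
noncomputable def mid6 (P : Finset (P3 V)) (M : Finset (Sym2 V)) : Finset (Sym2 V) :=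
  (Esub (psel P (cls6 M))).filter (isMiddle M)

/-- `M'_1`: edges of `M_1` meeting exactly one middle edge of a 3-path of `P*_6` and
no middle edge of a 3-path of `P*_2 ∪ P*_3 ∪ P*_4`. -/
noncomputable def Mset1' (P : Finset (P3 V)) (M : Finset (Sym2 V)) : Finset (Sym2 V) :=
  (Mset1 P M).filter fun f =>
    ((mid6 P M).filter fun g => shares f g).card = 1 ∧
    ∀ g, middleIn M (P234 P M) g → ¬ shares f g

/-- `M''_1`: edges of `M_1` meeting two middle edges of 3-paths of `P*_6`. -/
noncomputable def Mset1'' (P : Finset (P3 V)) (M : Finset (Sym2 V)) : Finset (Sym2 V) :=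
  (Mset1 P M).filter fun f => ((mid6 P M).filter fun g => shares f g).card = 2

/-- `M'''_1`: edges of `M_1` meeting exactly one middle edge of a 3-path of `P*_6` and
at least one middle edge of a 3-path of `P*_2 ∪ P*_3 ∪ P*_4`. -/
noncomputable def Mset1''' (P : Finset (P3 V)) (M : Finset (Sym2 V)) : Finset (Sym2 V) :=
  (Mset1 P M).filter fun f =>
    ((mid6 P M).filter fun g => shares f g).card = 1 ∧
    ∃ g, middleIn M (P234 P M) g ∧ shares f g

/-- Assumption on `P*`: for every 3-path `xyz ∈ P*` with `y ∉ V(M)` and `x, z ∈ V(M)`,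
the vertices `x` and `z` lie in two distinct edges of `M`. -/
def Ass (P : Finset (P3 V)) (M : Finset (Sym2 V)) : Prop :=
  ∀ p ∈ P, ¬ covered M p.y → covered M p.x → covered M p.z →
    ∃ e ∈ M, ∃ f ∈ M, p.x ∈ e ∧ p.z ∈ f ∧ e ≠ f

/-- An admissible edge w.r.t. `M`: either both endpoints are in `V(M)` and lie in two distinct
edges of `M`, or exactly one endpoint is in `V(M)`. -/
def goodEdge (M : Finset (Sym2 V)) (e : Sym2 V) : Prop :=
  (∃ u v : V, e = s(u, v) ∧ covered M u ∧ covered M v ∧ ∀ f ∈ M, ¬(u ∈ f ∧ v ∈ f)) ∨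
  (∃ u v : V, e = s(u, v) ∧ covered M u ∧ ¬ covered M v)

/-!
Choosing the heavier edge of every path of `P*` gives `n/3` pairwise disjoint edges, a matching
whose weight is `∑ max (w xy) (w yz)`, and the maximum of two numbers is at least their average.
A matching of size `k` covers `2k` vertices, so while `2k + 2 ≤ n` it extends by an edge between
two uncovered vertices; with nonnegative weights this makes the maximum weight of a matching of
size `k` nondecreasing in `k` up to `n/2`.
-/

omit [Fintype V] [DecidableEq V] in
lemma P3.y_mem_heavy (w : Sym2 V → ℝ) (p : P3 V) : p.y ∈ heavy w p := by
  unfold heavy; split_ifs <;> simp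

omit [Fintype V] in
lemma P3.mem_verts_of_mem_heavy (w : Sym2 V → ℝ) (p : P3 V) {v : V} (hv : v ∈ heavy w p) :
    v ∈ p.verts := by
  unfold heavy at hv
  unfold P3.verts
  split_ifs at hv <;> rcases Sym2.mem_iff.mp hv with rfl | rfl <;> simp

omit [Fintype V] [DecidableEq V] in
lemma P3.not_isDiag_heavy (w : Sym2 V → ℝ) (p : P3 V) : ¬ (heavy w p).IsDiag := by
  unfold heavy
  split_ifs
  · exact Sym2.mk_isDiag_iff.not.mpr p.hxy
  · exact Sym2.mk_isDiag_iff.not.mpr p.hyz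

omit [Fintype V] [DecidableEq V] in
lemma P3.weight_heavy (w : Sym2 V → ℝ) (p : P3 V) :
    w (heavy w p) = max (w s(p.x, p.y)) (w s(p.y, p.z)) := by
  unfold heavy
  split_ifs with h
  · exact (max_eq_left h).symm
  · exact (max_eq_right (le_of_not_ge h)).symm

omit [Fintype V] [DecidableEq V] in
lemma half_pw_le_maxSum (w : Sym2 V → ℝ) (S : Finset (P3 V)) :
    (1 / 2 : ℝ) * pw w S ≤ maxSum w S := by
  unfold pw maxSum P3.wt
  rw [Finset.mul_sum]
  gcongr with p
  linarith [le_max_left (w s(p.x, p.y)) (w s(p.y, p.z)),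
    le_max_right (w s(p.x, p.y)) (w s(p.y, p.z))]

namespace IsPacking

variable {P : Finset (P3 V)} (hP : IsPacking P) (w : Sym2 V → ℝ)
include hP

lemma injOn_heavy : Set.InjOn (heavy w) P := by
  intro p hp q hq hpq
  by_contra hne
  exact Finset.disjoint_left.mp (hP.2.1 p hp q hq hne) (by simp [P3.verts])
    (q.mem_verts_of_mem_heavy w (hpq ▸ p.y_mem_heavy w))

lemma isMatching_image_heavy : IsMatching (P.image (heavy w)) := by
  refine ⟨?_, ?_⟩
  · simp only [Finset.mem_image, forall_exists_index, and_imp]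
    rintro _ p - rfl
    exact p.not_isDiag_heavy w
  · simp only [Finset.mem_image]
    rintro _ ⟨p, hp, rfl⟩ _ ⟨q, hq, rfl⟩ hne v hvp hvq
    exact Finset.disjoint_left.mp (hP.2.1 p hp q hq (by rintro rfl; exact hne rfl))
      (p.mem_verts_of_mem_heavy w hvp) (q.mem_verts_of_mem_heavy w hvq)

lemma card_image_heavy : (P.image (heavy w)).card = Fintype.card V / 3 := by
  rw [Finset.card_image_of_injOn (hP.injOn_heavy w), hP.1]

lemma ew_image_heavy : ew w (P.image (heavy w)) = maxSum w P := by
  unfold ew maxSum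
  rw [Finset.sum_image fun p hp q hq => hP.injOn_heavy w hp hq]
  exact Finset.sum_congr rfl fun p _ => p.weight_heavy w

lemma maxSum_le_of_isMaxMatchingOfSize {M : Finset (Sym2 V)}
    (hM : IsMaxMatchingOfSize w (Fintype.card V / 3) M) : maxSum w P ≤ ew w M :=
  hP.ew_image_heavy w ▸ hM.2.2 _ (hP.isMatching_image_heavy w) (hP.card_image_heavy w)

end IsPacking

lemma card_filter_covered_le (M : Finset (Sym2 V)) :
    (Finset.univ.filter (covered M)).card ≤ 2 * M.card := by
  have hcov : Finset.univ.filter (covered M) = M.biUnion Sym2.toFinset := by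
    ext v
    simp [covered]
  calc (Finset.univ.filter (covered M)).card
      ≤ ∑ e ∈ M, e.toFinset.card := hcov ▸ Finset.card_biUnion_le
    _ ≤ ∑ _e ∈ M, 2 := Finset.sum_le_sum fun e _ => by
        rw [Sym2.card_toFinset]; split_ifs <;> omega
    _ = 2 * M.card := by rw [Finset.sum_const, smul_eq_mul, mul_comm]

namespace IsMatching

variable {M : Finset (Sym2 V)}

lemma exists_insert (hM : IsMatching M) (hcard : 2 * M.card + 2 ≤ Fintype.card V) :
    ∃ e ∉ M, IsMatching (insert e M) := by
  have hfree : 1 < (Finset.univ.filter fun v => ¬ covered M v).card := by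
    have := Finset.card_filter_add_card_filter_not (s := Finset.univ) (covered M)
    have := card_filter_covered_le M
    rw [Finset.card_univ] at *
    omega
  obtain ⟨u, hu, v, hv, huv⟩ := Finset.one_lt_card.mp hfree
  simp only [Finset.mem_filter, Finset.mem_univ, true_and] at hu hv
  have hfresh : ∀ e ∈ M, ∀ a ∈ s(u, v), a ∉ e := by
    intro e he a ha hae
    rcases Sym2.mem_iff.mp ha with rfl | rfl
    exacts [hu ⟨e, he, hae⟩, hv ⟨e, he, hae⟩]
  refine ⟨s(u, v), fun h => hfresh _ h u (Sym2.mem_mk_left u v) (Sym2.mem_mk_left u v), ?_, ?_⟩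
  · simp only [Finset.mem_insert, forall_eq_or_imp]
    exact ⟨Sym2.mk_isDiag_iff.not.mpr huv, hM.1⟩
  · simp only [Finset.mem_insert]
    rintro e (rfl | he) f (rfl | hf) hef a hae haf
    · exact hef rfl
    · exact hfresh f hf a hae haf
    · exact hfresh e he a haf hae
    · exact hM.2 e he f hf hef a hae haf

lemma exists_superset (hM : IsMatching M) (k : ℕ) (hk : 2 * (M.card + k) ≤ Fintype.card V) :
    ∃ M', M ⊆ M' ∧ IsMatching M' ∧ M'.card = M.card + k := by
  induction k with
  | zero => exact ⟨M, subset_rfl, hM, rfl⟩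
  | succ k ih =>
    obtain ⟨M', hMM', hM', hcard⟩ := ih (by omega)
    obtain ⟨e, he, hins⟩ := hM'.exists_insert (by omega)
    exact ⟨insert e M', hMM'.trans (Finset.subset_insert e M'), hins,
      by rw [Finset.card_insert_of_notMem he, hcard, add_assoc]⟩

lemma ew_le_of_isMaxMatchingOfSize {w : Sym2 V → ℝ} (hw : ∀ e, 0 ≤ w e) (hM : IsMatching M)
    {l : ℕ} (hl : M.card ≤ l) (hlV : 2 * l ≤ Fintype.card V) {M' : Finset (Sym2 V)}
    (hM' : IsMaxMatchingOfSize w l M') : ew w M ≤ ew w M' := by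
  obtain ⟨N, hMN, hN, hcard⟩ := hM.exists_superset (l - M.card) (by omega)
  calc ew w M ≤ ew w N := Finset.sum_le_sum_of_subset_of_nonneg hMN fun e _ _ => hw e
    _ ≤ ew w M' := hM'.2.2 N hN (by omega)

end IsMatching

theorem statement_0_general (n : ℕ) (hn : Fintype.card V = n)
    (w : Sym2 V → ℝ) (hw : ∀ e : Sym2 V, 0 ≤ w e)
    (Pstar : Finset (P3 V)) (hP : IsMaxPacking w Pstar)
    (M3 : Finset (Sym2 V)) (hM3 : IsMaxMatchingOfSize w (n / 3) M3) :
    maxSum w Pstar ≤ ew w M3 ∧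
    (1 / 2 : ℝ) * pw w Pstar ≤ maxSum w Pstar ∧
    (∀ (_ : 2 ∣ n) (M2' : Finset (Sym2 V)), IsMaxMatchingOfSize w (n / 2) M2' →
      ew w M3 ≤ ew w M2') := by
  subst hn
  refine ⟨hP.1.maxSum_le_of_isMaxMatchingOfSize w hM3, half_pw_le_maxSum w Pstar, ?_⟩
  intro _ M2 hM2
  exact hM3.1.ew_le_of_isMaxMatchingOfSize hw (by rw [hM3.2.1]; omega) (by omega) hM2

theorem statement_0 (n : ℕ) (hn : Fintype.card V = n) (h3 : 3 ∣ n)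
    (w : Sym2 V → ℝ) (hw : ∀ e : Sym2 V, 0 ≤ w e)
    (Pstar : Finset (P3 V)) (hP : IsMaxPacking w Pstar)
    (M3 : Finset (Sym2 V)) (hM3 : IsMaxMatchingOfSize w (n / 3) M3) :
    maxSum w Pstar ≤ ew w M3 ∧
    (1 / 2 : ℝ) * pw w Pstar ≤ maxSum w Pstar ∧
    (∀ (_ : 2 ∣ n) (M2' : Finset (Sym2 V)), IsMaxMatchingOfSize w (n / 2) M2' →
      ew w M3 ≤ ew w M2') :=
  statement_0_general n hn w hw Pstar hP M3 hM3

end MW3PP
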